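/- arXiv:2605.09462 — 3 statements merged into one kernel-verified Lean document; each statement's English description precedes it below -/
import Mathlib

section
/- Let (Ω, F, P) be a probability space with random variables A ∈ {0,1} and Z, D, W, X. Suppose q0 is a bounded measurable function of (Z,X), q1 a bounded measurable function of (Z,D,X), and 0 < P(A=1 | D, W, X) < 1 a.s. Then E[(1−A)·q1(Z,D,X) − A·q0(Z,X) | W, D, X] = 0 a.s. holds if and only if E[q0(Z,X) | A=1, D, W, X] · P(A=1|D,W,X)/P(A=0|D,W,X) = E[q1(Z,D,X) | A=0, D, W, X] a.s. -/
open MeasureTheory ProbabilityTheory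
open scoped MeasureTheory ProbabilityTheory

/-!
Since `A` is `{0,1}`-valued, `A = 1_{A=1}` and `1 - A = 1_{A=0}`. The heart of the matter is the
identity `E[f | S, m] · P(S | m) = E[1_S f | m]` for a bounded `f` and an event `S` of positive
mass, where `E[· | S, m]` is conditional expectation under `μ[|S] = μ(S)⁻¹ μ|_S`: both sides have
the same integrals over `m`-measurable sets, by the pull-out property. Since `E[f | S, m]` is only
determined `μ[|S]`-a.e., it is first replaced by a bounded version; this does not change its
product with `P(S | m)`, which vanishes `μ`-a.e. wherever the two versions differ.

With `p = P(A = 1 | D, W, X)`, the first condition thus reads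
`E[q1 | A = 0, D, W, X] (1 - p) - E[q0 | A = 1, D, W, X] p = 0`, and as `0 < p < 1` this
rearranges to the second one.
-/

namespace ProbabilityTheory

variable {Ω : Type*} {m mΩ : MeasurableSpace Ω} {μ : Measure Ω} {S B : Set Ω} {A : Ω → ℝ}

lemma setIntegral_cond (hB : MeasurableSet B) (φ : Ω → ℝ) :
    ∫ ω in B, φ ω ∂μ[|S] = (μ.real S)⁻¹ * ∫ ω in B ∩ S, φ ω ∂μ := by
  rw [cond, Measure.restrict_smul, integral_smul_measure, Measure.restrict_restrict hB,
    ENNReal.toReal_inv, smul_eq_mul, Measure.real]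

lemma setIntegral_indicator_eq_mul_setIntegral_cond [IsFiniteMeasure μ] (hS : MeasurableSet S)
    (hS0 : μ S ≠ 0) (hB : MeasurableSet B) (φ : Ω → ℝ) :
    ∫ ω in B, S.indicator φ ω ∂μ = μ.real S * ∫ ω in B, φ ω ∂μ[|S] := by
  rw [setIntegral_cond hB, ← mul_assoc, mul_inv_cancel₀ ((measureReal_ne_zero_iff).2 hS0), one_mul,
    setIntegral_indicator hS]

lemma exists_stronglyMeasurable_abs_le_ae_eq_condExp {ν : Measure Ω} {f : Ω → ℝ} {C : ℝ}
    (hfC : ∀ᵐ ω ∂ν, |f ω| ≤ C) :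
    ∃ g : Ω → ℝ, StronglyMeasurable[m] g ∧ (∀ ω, |g ω| ≤ |C|) ∧ g =ᵐ[ν] ν[f | m] := by
  have hE : StronglyMeasurable[m] ν[f | m] := stronglyMeasurable_condExp
  refine ⟨{ω | |ν[f | m] ω| ≤ C}.indicator ν[f | m],
    hE.indicator (hE.norm.measurable measurableSet_Iic), fun ω => ?_, ?_⟩
  · by_cases hω : |ν[f | m] ω| ≤ C
    · simpa [hω] using hω.trans (le_abs_self C)
    · simp [hω]
  · filter_upwards [ae_bdd_abs_condExp_of_ae_bdd_abs (m := m) hfC] with ω hω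
    simp [hω]

lemma measure_ne_zero_of_ae_condExp_indicator_one_pos [NeZero μ]
    (h : ∀ᵐ ω ∂μ, 0 < μ[S.indicator (1 : Ω → ℝ) | m] ω) : μ S ≠ 0 := by
  intro hS
  have h0 : μ[S.indicator (1 : Ω → ℝ) | m] =ᵐ[μ] 0 :=
    (condExp_congr_ae (indicator_meas_zero hS)).trans condExp_zero.eventuallyEq
  obtain ⟨ω, hpos, hzero⟩ := (h.and h0).exists
  exact hpos.ne' hzero

variable [IsFiniteMeasure μ]

lemma condExp_indicator_one_ae_eq_zero_of_measure_inter_eq_zero (hm : m ≤ mΩ)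
    (hS : MeasurableSet S) {T : Set Ω} (hT : MeasurableSet[m] T) (hST : μ (S ∩ T) = 0) :
    μ[S.indicator (1 : Ω → ℝ) | m] =ᵐ[μ.restrict T] 0 := by
  have hint : ∫ ω in T, μ[S.indicator (1 : Ω → ℝ) | m] ω ∂μ = 0 := by
    rw [setIntegral_condExp hm ((integrable_const 1).indicator hS) hT, setIntegral_indicator hS,
      Set.inter_comm, setIntegral_measure_zero _ hST]
  refine (setIntegral_eq_zero_iff_of_nonneg_ae ?_ integrable_condExp.integrableOn).1 hint
  exact ae_restrict_of_ae (condExp_nonneg (Filter.Eventually.of_forall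
    (Set.indicator_nonneg fun _ _ => zero_le_one)))

lemma mul_condExp_indicator_one_congr_of_ae_cond_eq (hm : m ≤ mΩ) (hS : MeasurableSet S)
    {g g' : Ω → ℝ} (hg : StronglyMeasurable[m] g) (hg' : StronglyMeasurable[m] g')
    (hgg' : g =ᵐ[μ[|S]] g') :
    g * μ[S.indicator (1 : Ω → ℝ) | m] =ᵐ[μ] g' * μ[S.indicator (1 : Ω → ℝ) | m] := by
  set T := {ω | g ω = g' ω}ᶜ
  have hT : MeasurableSet[m] T := (measurableSet_eq_fun hg.measurable hg'.measurable).compl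
  have hST : μ (S ∩ T) = 0 := by
    have hTS : μ[T | S] = 0 := ae_iff.1 hgg'
    rwa [cond_apply hS, mul_eq_zero, or_iff_right (ENNReal.inv_ne_zero.2 (measure_ne_top μ S))]
      at hTS
  have h0 := (ae_restrict_iff' (hm T hT)).1
    (condExp_indicator_one_ae_eq_zero_of_measure_inter_eq_zero hm hS hT hST)
  filter_upwards [h0] with ω hω
  by_cases hωT : ω ∈ T
  · simp [hω hωT]
  · have hgω : g ω = g' ω := by simpa [T] using hωT
    simp [hgω]

lemma mul_condExp_indicator_one_ae_eq_condExp_indicator (hm : m ≤ mΩ) (hS : MeasurableSet S)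
    (hS0 : μ S ≠ 0) {f g : Ω → ℝ} (hf : Integrable f μ) (hg : StronglyMeasurable[m] g) {C : ℝ}
    (hgC : ∀ ω, |g ω| ≤ C) (hgf : g =ᵐ[μ[|S]] (μ[|S])[f | m]) :
    g * μ[S.indicator (1 : Ω → ℝ) | m] =ᵐ[μ] μ[S.indicator f | m] := by
  have : IsProbabilityMeasure μ[|S] := cond_isProbabilityMeasure hS0
  have hpull : μ[S.indicator g | m] =ᵐ[μ] g * μ[S.indicator (1 : Ω → ℝ) | m] := by
    have hg_ind : S.indicator g = g * S.indicator 1 := by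
      ext ω; by_cases hω : ω ∈ S <;> simp [hω]
    rw [hg_ind]
    exact condExp_stronglyMeasurable_mul_of_bound hm hg ((integrable_const 1).indicator hS) C
      (Filter.Eventually.of_forall hgC)
  have hfS : Integrable f μ[|S] := hf.restrict.smul_measure (ENNReal.inv_ne_top.2 hS0)
  have hgS : Integrable g μ :=
    .of_bound (hg.mono hm).aestronglyMeasurable C (Filter.Eventually.of_forall hgC)
  refine hpull.symm.trans (ae_eq_condExp_of_forall_setIntegral_eq hm (hf.indicator hS)
    (fun _ _ _ => integrable_condExp.integrableOn) (fun B hB _ => ?_)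
    stronglyMeasurable_condExp.aestronglyMeasurable)
  calc ∫ ω in B, μ[S.indicator g | m] ω ∂μ
      = ∫ ω in B, S.indicator g ω ∂μ := setIntegral_condExp hm (hgS.indicator hS) hB
    _ = μ.real S * ∫ ω in B, (μ[|S])[f | m] ω ∂μ[|S] := by
        rw [setIntegral_indicator_eq_mul_setIntegral_cond hS hS0 (hm B hB),
          setIntegral_congr_ae (hm B hB) (hgf.mono fun _ h _ => h)]
    _ = μ.real S * ∫ ω in B, f ω ∂μ[|S] := by rw [setIntegral_condExp hm hfS hB]
    _ = ∫ ω in B, S.indicator f ω ∂μ :=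
        (setIntegral_indicator_eq_mul_setIntegral_cond hS hS0 (hm B hB) f).symm

theorem condExp_cond_mul_condExp_indicator_one (hm : m ≤ mΩ) (hS : MeasurableSet S)
    (hS0 : μ S ≠ 0) {f : Ω → ℝ} (hf : AEStronglyMeasurable f μ) {C : ℝ}
    (hfC : ∀ᵐ ω ∂μ, |f ω| ≤ C) :
    (μ[|S])[f | m] * μ[S.indicator (1 : Ω → ℝ) | m] =ᵐ[μ] μ[S.indicator f | m] := by
  obtain ⟨g, hg, hgC, hgf⟩ :=
    exists_stronglyMeasurable_abs_le_ae_eq_condExp (m := m) (cond_absolutelyContinuous.ae_le hfC)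
  have hf_int : Integrable f μ := .of_bound hf C (hfC.mono fun _ h => by rwa [Real.norm_eq_abs])
  exact (mul_condExp_indicator_one_congr_of_ae_cond_eq hm hS stronglyMeasurable_condExp hg
    hgf.symm).trans (mul_condExp_indicator_one_ae_eq_condExp_indicator hm hS hS0 hf_int hg hgC hgf)

lemma indicator_setOf_eq_one_of_zero_or_one (hA01 : ∀ ω, A ω = 0 ∨ A ω = 1) :
    {ω | A ω = 1}.indicator 1 = A := by
  ext ω; rcases hA01 ω with h | h <;> simp [h]

lemma indicator_setOf_eq_zero_of_zero_or_one (hA01 : ∀ ω, A ω = 0 ∨ A ω = 1) :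
    {ω | A ω = 0}.indicator 1 = 1 - A := by
  ext ω; rcases hA01 ω with h | h <;> simp [h]

lemma condExp_indicator_setOf_eq_zero_of_zero_or_one (hm : m ≤ mΩ) (hA : Measurable A)
    (hA01 : ∀ ω, A ω = 0 ∨ A ω = 1) :
    μ[{ω | A ω = 0}.indicator 1 | m] =ᵐ[μ] 1 - μ[A | m] := by
  have hA_int : Integrable A μ :=
    indicator_setOf_eq_one_of_zero_or_one hA01 ▸
      (integrable_const 1).indicator (hA (measurableSet_singleton 1))
  rw [indicator_setOf_eq_zero_of_zero_or_one hA01]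
  exact (condExp_sub (integrable_const 1) hA_int m).trans (by rw [condExp_const hm]; rfl)

lemma condExp_one_sub_mul_sub_mul_ae_eq (hm : m ≤ mΩ) (hA : Measurable A)
    (hA01 : ∀ ω, A ω = 0 ∨ A ω = 1) (hμ₁ : μ {ω | A ω = 1} ≠ 0) (hμ₀ : μ {ω | A ω = 0} ≠ 0)
    {g₀ g₁ : Ω → ℝ} (hg₀ : AEStronglyMeasurable g₀ μ) (hg₁ : AEStronglyMeasurable g₁ μ)
    {C₀ C₁ : ℝ} (hg₀C : ∀ ω, |g₀ ω| ≤ C₀) (hg₁C : ∀ ω, |g₁ ω| ≤ C₁) :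
    μ[fun ω => (1 - A ω) * g₁ ω - A ω * g₀ ω | m] =ᵐ[μ]
      (μ[|{ω | A ω = 0}])[g₁ | m] * (1 - μ[A | m]) - (μ[|{ω | A ω = 1}])[g₀ | m] * μ[A | m] := by
  have hS₁ : MeasurableSet {ω | A ω = 1} := hA (measurableSet_singleton 1)
  have hS₀ : MeasurableSet {ω | A ω = 0} := hA (measurableSet_singleton 0)
  have hdiff : (fun ω => (1 - A ω) * g₁ ω - A ω * g₀ ω) =
      {ω | A ω = 0}.indicator g₁ - {ω | A ω = 1}.indicator g₀ := by
    ext ω; rcases hA01 ω with h | h <;> simp [h]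
  have hcond₁ := condExp_cond_mul_condExp_indicator_one hm hS₁ hμ₁ hg₀ (ae_of_all _ hg₀C)
  have hcond₀ := condExp_cond_mul_condExp_indicator_one hm hS₀ hμ₀ hg₁ (ae_of_all _ hg₁C)
  rw [indicator_setOf_eq_one_of_zero_or_one hA01] at hcond₁
  have hg₀_int : Integrable g₀ μ := .of_bound hg₀ C₀ (ae_of_all _ hg₀C)
  have hg₁_int : Integrable g₁ μ := .of_bound hg₁ C₁ (ae_of_all _ hg₁C)
  rw [hdiff]
  refine (condExp_sub (hg₁_int.indicator hS₀) (hg₀_int.indicator hS₁) m).trans ?_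
  refine (hcond₀.symm.sub hcond₁.symm).trans ?_
  filter_upwards [condExp_indicator_setOf_eq_zero_of_zero_or_one hm hA hA01 (μ := μ)] with ω hω
  simp [hω]

end ProbabilityTheory

/-- `E[(1−A)q1(Z,D,X) − A q0(Z,X) | W,D,X] = 0` a.s. iff
`E[q0 | A=1,D,W,X] · P(A=1|D,W,X)/P(A=0|D,W,X) = E[q1 | A=0,D,W,X]` a.s.
`P(A=1|D,W,X)` is encoded as `E[A | σ(D,W,X)]` and `P(A=0|·) = 1 − E[A|·]`;
conditional expectations given `A=a` are conditional expectations w.r.t. `σ(D,W,X)`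
under the conditional measure `μ[|{A=a}]`. -/
theorem stmt1
    {Ω : Type*} [mΩ : MeasurableSpace Ω] (μ : Measure Ω) [IsProbabilityMeasure μ]
    (A Z D W X : Ω → ℝ)
    (hA : Measurable A) (hZ : Measurable Z) (hD : Measurable D)
    (hW : Measurable W) (hX : Measurable X)
    (hA01 : ∀ ω, A ω = 0 ∨ A ω = 1)
    (q0 : ℝ × ℝ → ℝ) (hq0 : Measurable q0) (C0 : ℝ) (hq0b : ∀ p, |q0 p| ≤ C0)
    (q1 : ℝ × ℝ × ℝ → ℝ) (hq1 : Measurable q1) (C1 : ℝ) (hq1b : ∀ p, |q1 p| ≤ C1)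
    (mDWX : MeasurableSpace Ω)
    (hmDWX : mDWX = MeasurableSpace.comap (fun ω => (D ω, W ω, X ω)) inferInstance)
    (hpos : ∀ᵐ ω ∂μ, 0 < (μ[A | mDWX]) ω ∧ (μ[A | mDWX]) ω < 1) :
    ((μ[(fun ω => (1 - A ω) * q1 (Z ω, D ω, X ω) - A ω * q0 (Z ω, X ω)) | mDWX])
        =ᵐ[μ] 0)
      ↔ (∀ᵐ ω ∂μ,
          ((μ[|{ω | A ω = 1}])[(fun ω => q0 (Z ω, X ω)) | mDWX]) ω
              * ((μ[A | mDWX]) ω / (1 - (μ[A | mDWX]) ω))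
            = ((μ[|{ω | A ω = 0}])[(fun ω => q1 (Z ω, D ω, X ω)) | mDWX]) ω) := by
  have hm : mDWX ≤ mΩ := hmDWX ▸ (hD.prodMk (hW.prodMk hX)).comap_le
  have hμ₁ : μ {ω | A ω = 1} ≠ 0 :=
    measure_ne_zero_of_ae_condExp_indicator_one_pos (m := mDWX) <| by
      rw [indicator_setOf_eq_one_of_zero_or_one hA01]
      exact hpos.mono fun _ h => h.1
  have hμ₀ : μ {ω | A ω = 0} ≠ 0 :=
    measure_ne_zero_of_ae_condExp_indicator_one_pos (m := mDWX) <| by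
      filter_upwards [condExp_indicator_setOf_eq_zero_of_zero_or_one hm hA hA01, hpos]
        with ω hω hposω
      simpa [hω] using hposω.2
  have hsplit := condExp_one_sub_mul_sub_mul_ae_eq hm hA hA01 hμ₁ hμ₀
    (g₀ := fun ω => q0 (Z ω, X ω)) (g₁ := fun ω => q1 (Z ω, D ω, X ω))
    (hq0.comp (hZ.prodMk hX)).aestronglyMeasurable
    (hq1.comp (hZ.prodMk (hD.prodMk hX))).aestronglyMeasurable (fun _ => hq0b _) (fun _ => hq1b _)
  beta_reduce at hsplit
  refine Filter.eventually_congr ?_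
  filter_upwards [hsplit, hpos] with ω hsplitω hposω
  simp only [hsplitω, Pi.sub_apply, Pi.mul_apply, Pi.one_apply, Pi.zero_apply]
  rw [← mul_div_assoc, div_eq_iff (sub_ne_zero.2 hposω.2.ne')]
  constructor <;> intro h <;> linarith
end

section
/- Let A ∈ {0,1} and Y, Z, W, M, D, X be random variables. Suppose integrable measurable functions h2(W,M,D,X), h1(W,D,X), h0(W,X), q0(Z,X), q1(Z,D,X), q2(Z,M,D,X) satisfy the six conditional moment equations: (a) E[Y − h2 | A=1, M, D, Z, X] = 0; (b) E[h2 − h1 | A=0, D, Z, X] = 0; (c) E[h1 − h0 | A=1, Z, X] = 0; (d) E[A·q0 − 1 | W, X] = 0; (e) E[(1−A)·q1 − A·q0 | W, D, X] = 0; (f) E[A·q2 − (1−A)·q1 | W, M, D, X] = 0, all almost surely, with all relevant products integrable. Then the four quantities E[h0(W,X)], E[A·q0(Z,X)·h1(W,D,X)], E[(1−A)·q1(Z,D,X)·h2(W,M,D,X)], and E[A·Y·q2(Z,M,D,X)] are all equal. -/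
/-!
Each moment equation has the form `E[U - V | 𝒢] = 0`, possibly under `μ[|{A = a}]`, and the
bridge function `g` of the other family that sits next to it in the chain is `𝒢`-measurable.
The pull-out property turns the equation into `E[g U] = E[g V]`. Under `μ[|{A = a}]` this is,
up to the factor `μ {A = a}`, the same identity for `E[1{A = a} g U]`, and `1{A = a}` is `A` or
`1 - A` because `A` is `{0,1}`-valued. The six identities telescope:
`E[h0] = E[A q0 h0] = E[A q0 h1] = E[(1-A) q1 h1] = E[(1-A) q1 h2] = E[A q2 h2] = E[A Y q2]`.
-/

open MeasureTheory ProbabilityTheory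
open scoped MeasureTheory ProbabilityTheory

section

variable {Ω : Type*} {m mΩ : MeasurableSpace Ω} {μ : Measure Ω}

theorem integral_mul_eq_zero_of_condExp_eq_zero [IsFiniteMeasure μ] (hm : m ≤ mΩ)
    {f g : Ω → ℝ} (hg : StronglyMeasurable[m] g) (hf : Integrable f μ)
    (hgf : Integrable (g * f) μ) (hf_cond : μ[f|m] =ᵐ[μ] 0) :
    ∫ ω, g ω * f ω ∂μ = 0 := calc
  ∫ ω, g ω * f ω ∂μ = ∫ ω, μ[g * f|m] ω ∂μ := (integral_condExp hm).symm
  _ = ∫ ω, (g * μ[f|m]) ω ∂μ :=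
    integral_congr_ae (condExp_mul_of_stronglyMeasurable_left hg hgf hf)
  _ = 0 := integral_eq_zero_of_ae <| by filter_upwards [hf_cond] with ω hω; simp [hω]

theorem integral_mul_eq_of_condExp_sub_eq_zero [IsFiniteMeasure μ] (hm : m ≤ mΩ)
    {u v g : Ω → ℝ} (hu : Integrable u μ) (hv : Integrable v μ)
    (hug : Integrable (fun ω => u ω * g ω) μ) (hvg : Integrable (fun ω => v ω * g ω) μ)
    (hg : StronglyMeasurable[m] g) (h_cond : μ[fun ω => u ω - v ω|m] =ᵐ[μ] 0) :
    ∫ ω, u ω * g ω ∂μ = ∫ ω, v ω * g ω ∂μ := by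
  have hgf : Integrable (g * fun ω => u ω - v ω) μ :=
    (hug.sub hvg).congr (ae_of_all _ fun ω => by simp only [Pi.sub_apply, Pi.mul_apply]; ring)
  rw [← sub_eq_zero, ← integral_sub hug hvg,
    ← integral_mul_eq_zero_of_condExp_eq_zero hm hg (hu.sub hv) hgf h_cond]
  exact integral_congr_ae (ae_of_all _ fun ω => by simp only [Pi.sub_apply]; ring)

theorem setIntegral_eq_measureReal_mul_integral_cond [IsFiniteMeasure μ] (s : Set Ω)
    (f : Ω → ℝ) : ∫ ω in s, f ω ∂μ = μ.real s * ∫ ω, f ω ∂μ[|s] := by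
  rcases eq_or_ne (μ s) 0 with hs | hs
  · simp [Measure.restrict_eq_zero.mpr hs, measureReal_def, hs]
  · rw [ProbabilityTheory.cond, integral_smul_measure, ENNReal.toReal_inv, smul_eq_mul,
      ← mul_assoc, measureReal_def,
      mul_inv_cancel₀ (ENNReal.toReal_ne_zero.mpr ⟨hs, measure_ne_top μ s⟩), one_mul]

theorem MeasureTheory.IntegrableOn.integrable_cond {s : Set Ω} {f : Ω → ℝ}
    (hf : IntegrableOn f s μ) : Integrable f μ[|s] := by
  rcases eq_or_ne (μ s) 0 with hs | hs
  · simp [cond_eq_zero_of_meas_eq_zero hs]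
  · exact hf.smul_measure (ENNReal.inv_ne_top.mpr hs)

theorem setIntegral_mul_eq_zero_of_condExp_cond_eq_zero [IsFiniteMeasure μ] {s : Set Ω}
    (hm : m ≤ mΩ) {f g : Ω → ℝ} (hg : StronglyMeasurable[m] g) (hf : IntegrableOn f s μ)
    (hgf : IntegrableOn (g * f) s μ) (hf_cond : μ[|s][f|m] =ᵐ[μ[|s]] 0) :
    ∫ ω in s, g ω * f ω ∂μ = 0 := by
  rw [setIntegral_eq_measureReal_mul_integral_cond, integral_mul_eq_zero_of_condExp_eq_zero hm
    hg hf.integrable_cond hgf.integrable_cond hf_cond, mul_zero]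

theorem mul_eq_indicator_of_eq_indicator_one {s : Set Ω} {B : Ω → ℝ} (hB : B = s.indicator 1)
    (f : Ω → ℝ) : (fun ω => B ω * f ω) = s.indicator f := by
  subst hB
  funext ω
  by_cases hω : ω ∈ s <;> simp [hω]

theorem integrable_mul_of_eq_indicator_one {s : Set Ω} (hs : MeasurableSet s) {B : Ω → ℝ}
    (hB : B = s.indicator 1) {f : Ω → ℝ} (hf : Integrable f μ) :
    Integrable (fun ω => B ω * f ω) μ := by
  rw [mul_eq_indicator_of_eq_indicator_one hB]
  exact hf.indicator hs

theorem integral_indicator_mul_eq_of_condExp_cond_sub_eq_zero [IsFiniteMeasure μ] {s : Set Ω}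
    (hs : MeasurableSet s) {B : Ω → ℝ} (hB : B = s.indicator 1) (hm : m ≤ mΩ)
    {u v g : Ω → ℝ} (hu : Integrable u μ) (hv : Integrable v μ)
    (hgu : Integrable (fun ω => B ω * g ω * u ω) μ)
    (hgv : Integrable (fun ω => B ω * g ω * v ω) μ) (hg : StronglyMeasurable[m] g)
    (h_cond : μ[|s][fun ω => u ω - v ω|m] =ᵐ[μ[|s]] 0) :
    ∫ ω, B ω * g ω * u ω ∂μ = ∫ ω, B ω * g ω * v ω ∂μ := by
  have h_diff : (fun ω => B ω * g ω * u ω - B ω * g ω * v ω)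
      = s.indicator (g * fun ω => u ω - v ω) := by
    rw [← mul_eq_indicator_of_eq_indicator_one hB]
    funext ω
    simp only [Pi.mul_apply]
    ring
  have hgf : IntegrableOn (g * fun ω => u ω - v ω) s μ :=
    (integrable_indicator_iff hs).mp (by rw [← h_diff]; exact hgu.sub hgv)
  rw [← sub_eq_zero, ← integral_sub hgu hgv, h_diff, integral_indicator hs]
  exact setIntegral_mul_eq_zero_of_condExp_cond_eq_zero hm hg (hu.sub hv).integrableOn hgf h_cond

end

theorem stmt5_general
    {Ω : Type*} [mΩ : MeasurableSpace Ω] (μ : Measure Ω) [IsProbabilityMeasure μ]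
    (A Y Z W M D X : Ω → ℝ)
    (hA : Measurable A) (hZ : Measurable Z) (hW : Measurable W)
    (hM : Measurable M) (hD : Measurable D) (hX : Measurable X)
    (hA01 : ∀ ω, A ω = 0 ∨ A ω = 1)
    (h2 : ℝ × ℝ × ℝ × ℝ → ℝ) (hh2 : Measurable h2)
    (hh2int : Integrable (fun ω => h2 (W ω, M ω, D ω, X ω)) μ)
    (h1 : ℝ × ℝ × ℝ → ℝ) (hh1 : Measurable h1)
    (hh1int : Integrable (fun ω => h1 (W ω, D ω, X ω)) μ)
    (h0 : ℝ × ℝ → ℝ) (hh0 : Measurable h0)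
    (hh0int : Integrable (fun ω => h0 (W ω, X ω)) μ)
    (q0 : ℝ × ℝ → ℝ) (hq0 : Measurable q0)
    (hq0int : Integrable (fun ω => q0 (Z ω, X ω)) μ)
    (q1 : ℝ × ℝ × ℝ → ℝ) (hq1 : Measurable q1)
    (hq1int : Integrable (fun ω => q1 (Z ω, D ω, X ω)) μ)
    (q2 : ℝ × ℝ × ℝ × ℝ → ℝ) (hq2 : Measurable q2)
    (hq2int : Integrable (fun ω => q2 (Z ω, M ω, D ω, X ω)) μ)
    (hYint : Integrable Y μ)
    -- σ-algebras generated by the indicated variables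
    (mMDZX mDZX mZX mWX mWDX mWMDX : MeasurableSpace Ω)
    (hmMDZX : mMDZX = MeasurableSpace.comap (fun ω => (M ω, D ω, Z ω, X ω)) inferInstance)
    (hmDZX : mDZX = MeasurableSpace.comap (fun ω => (D ω, Z ω, X ω)) inferInstance)
    (hmZX : mZX = MeasurableSpace.comap (fun ω => (Z ω, X ω)) inferInstance)
    (hmWX : mWX = MeasurableSpace.comap (fun ω => (W ω, X ω)) inferInstance)
    (hmWDX : mWDX = MeasurableSpace.comap (fun ω => (W ω, D ω, X ω)) inferInstance)
    (hmWMDX : mWMDX = MeasurableSpace.comap (fun ω => (W ω, M ω, D ω, X ω)) inferInstance)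
    -- (a) E[Y − h2 | A=1, M, D, Z, X] = 0
    (ha : ((μ[|{ω | A ω = 1}])[(fun ω => Y ω - h2 (W ω, M ω, D ω, X ω)) | mMDZX])
        =ᵐ[μ[|{ω | A ω = 1}]] 0)
    -- (b) E[h2 − h1 | A=0, D, Z, X] = 0
    (hb : ((μ[|{ω | A ω = 0}])[(fun ω => h2 (W ω, M ω, D ω, X ω) - h1 (W ω, D ω, X ω)) | mDZX])
        =ᵐ[μ[|{ω | A ω = 0}]] 0)
    -- (c) E[h1 − h0 | A=1, Z, X] = 0
    (hc : ((μ[|{ω | A ω = 1}])[(fun ω => h1 (W ω, D ω, X ω) - h0 (W ω, X ω)) | mZX])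
        =ᵐ[μ[|{ω | A ω = 1}]] 0)
    -- (d) E[A q0 − 1 | W, X] = 0
    (hd : (μ[(fun ω => A ω * q0 (Z ω, X ω) - 1) | mWX]) =ᵐ[μ] 0)
    -- (e) E[(1−A) q1 − A q0 | W, D, X] = 0
    (he : (μ[(fun ω => (1 - A ω) * q1 (Z ω, D ω, X ω) - A ω * q0 (Z ω, X ω)) | mWDX])
        =ᵐ[μ] 0)
    -- (f) E[A q2 − (1−A) q1 | W, M, D, X] = 0
    (hf : (μ[(fun ω => A ω * q2 (Z ω, M ω, D ω, X ω) - (1 - A ω) * q1 (Z ω, D ω, X ω)) | mWMDX])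
        =ᵐ[μ] 0)
    -- integrability of the relevant products
    (hi1 : Integrable (fun ω => A ω * q0 (Z ω, X ω) * h1 (W ω, D ω, X ω)) μ)
    (hi2 : Integrable (fun ω => A ω * q0 (Z ω, X ω) * h0 (W ω, X ω)) μ)
    (hi3 : Integrable (fun ω => (1 - A ω) * q1 (Z ω, D ω, X ω) * h2 (W ω, M ω, D ω, X ω)) μ)
    (hi4 : Integrable (fun ω => (1 - A ω) * q1 (Z ω, D ω, X ω) * h1 (W ω, D ω, X ω)) μ)
    (hi5 : Integrable (fun ω => A ω * q2 (Z ω, M ω, D ω, X ω) * h2 (W ω, M ω, D ω, X ω)) μ)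
    (hi6 : Integrable (fun ω => A ω * Y ω * q2 (Z ω, M ω, D ω, X ω)) μ) :
    (∫ ω, h0 (W ω, X ω) ∂μ
        = ∫ ω, A ω * q0 (Z ω, X ω) * h1 (W ω, D ω, X ω) ∂μ)
    ∧ (∫ ω, A ω * q0 (Z ω, X ω) * h1 (W ω, D ω, X ω) ∂μ
        = ∫ ω, (1 - A ω) * q1 (Z ω, D ω, X ω) * h2 (W ω, M ω, D ω, X ω) ∂μ)
    ∧ (∫ ω, (1 - A ω) * q1 (Z ω, D ω, X ω) * h2 (W ω, M ω, D ω, X ω) ∂μ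
        = ∫ ω, A ω * Y ω * q2 (Z ω, M ω, D ω, X ω) ∂μ) := by
  subst hmMDZX hmDZX hmZX hmWX hmWDX hmWMDX
  have hs1 : MeasurableSet {ω | A ω = 1} := hA (measurableSet_singleton 1)
  have hs0 : MeasurableSet {ω | A ω = 0} := hA (measurableSet_singleton 0)
  have hA_ind : A = {ω | A ω = 1}.indicator 1 := by
    funext ω; rcases hA01 ω with h | h <;> simp [h]
  have h1A_ind : (fun ω => 1 - A ω) = {ω | A ω = 0}.indicator 1 := by
    funext ω; rcases hA01 ω with h | h <;> simp [h]
  have hAq0 := integrable_mul_of_eq_indicator_one hs1 hA_ind hq0int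
  have h1Aq1 := integrable_mul_of_eq_indicator_one hs0 h1A_ind hq1int
  have hAq2 := integrable_mul_of_eq_indicator_one hs1 hA_ind hq2int
  have step_d := integral_mul_eq_of_condExp_sub_eq_zero (hW.prodMk hX).comap_le
    hAq0 (integrable_const 1) hi2 (by simpa using hh0int)
    (hh0.comp (comap_measurable _)).stronglyMeasurable hd
  rw [integral_congr_ae (ae_of_all _ fun ω => one_mul _)] at step_d
  have step_c := integral_indicator_mul_eq_of_condExp_cond_sub_eq_zero hs1 hA_ind
    (hZ.prodMk hX).comap_le hh1int hh0int hi1 hi2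
    (hq0.comp (comap_measurable _)).stronglyMeasurable hc
  have step_e := integral_mul_eq_of_condExp_sub_eq_zero (hW.prodMk (hD.prodMk hX)).comap_le
    h1Aq1 hAq0 hi4 hi1 (hh1.comp (comap_measurable _)).stronglyMeasurable he
  have step_b := integral_indicator_mul_eq_of_condExp_cond_sub_eq_zero hs0 h1A_ind
    (hD.prodMk (hZ.prodMk hX)).comap_le hh2int hh1int hi3 hi4
    ((hq1.comp (f := fun p : ℝ × ℝ × ℝ => (p.2.1, p.1, p.2.2)) (by fun_prop)).comp
      (comap_measurable _)).stronglyMeasurable hb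
  have step_f := integral_mul_eq_of_condExp_sub_eq_zero
    (hW.prodMk (hM.prodMk (hD.prodMk hX))).comap_le hAq2 h1Aq1 hi5 hi3
    (hh2.comp (comap_measurable _)).stronglyMeasurable hf
  have step_a := integral_indicator_mul_eq_of_condExp_cond_sub_eq_zero hs1 hA_ind
    (hM.prodMk (hD.prodMk (hZ.prodMk hX))).comap_le hYint hh2int
    (hi6.congr (ae_of_all _ fun ω => mul_right_comm _ _ _)) hi5
    ((hq2.comp (f := fun p : ℝ × ℝ × ℝ × ℝ => (p.2.2.1, p.1, p.2.1, p.2.2.2))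
      (by fun_prop)).comp (comap_measurable _)).stronglyMeasurable ha
  have h_comm : ∫ ω, A ω * Y ω * q2 (Z ω, M ω, D ω, X ω) ∂μ
      = ∫ ω, A ω * q2 (Z ω, M ω, D ω, X ω) * Y ω ∂μ :=
    integral_congr_ae (ae_of_all _ fun ω => mul_right_comm _ _ _)
  exact ⟨by linarith, by linarith, by linarith⟩

/-- under the six conditional moment equations (a)–(f) defining the
outcome bridge functions `h2, h1, h0` and the treatment bridge functions
`q0, q1, q2` (with all relevant products integrable), the four identification
formulas `E[h0]`, `E[A q0 h1]`, `E[(1−A) q1 h2]` and `E[A Y q2]` coincide.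
Conditional expectations given `A=a` are conditional expectations under the
conditional measure `μ[|{A=a}]`. -/
theorem stmt5
    {Ω : Type*} [mΩ : MeasurableSpace Ω] (μ : Measure Ω) [IsProbabilityMeasure μ]
    (A Y Z W M D X : Ω → ℝ)
    (hA : Measurable A) (hY : Measurable Y) (hZ : Measurable Z) (hW : Measurable W)
    (hM : Measurable M) (hD : Measurable D) (hX : Measurable X)
    (hA01 : ∀ ω, A ω = 0 ∨ A ω = 1)
    (h2 : ℝ × ℝ × ℝ × ℝ → ℝ) (hh2 : Measurable h2)
    (hh2int : Integrable (fun ω => h2 (W ω, M ω, D ω, X ω)) μ)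
    (h1 : ℝ × ℝ × ℝ → ℝ) (hh1 : Measurable h1)
    (hh1int : Integrable (fun ω => h1 (W ω, D ω, X ω)) μ)
    (h0 : ℝ × ℝ → ℝ) (hh0 : Measurable h0)
    (hh0int : Integrable (fun ω => h0 (W ω, X ω)) μ)
    (q0 : ℝ × ℝ → ℝ) (hq0 : Measurable q0)
    (hq0int : Integrable (fun ω => q0 (Z ω, X ω)) μ)
    (q1 : ℝ × ℝ × ℝ → ℝ) (hq1 : Measurable q1)
    (hq1int : Integrable (fun ω => q1 (Z ω, D ω, X ω)) μ)
    (q2 : ℝ × ℝ × ℝ × ℝ → ℝ) (hq2 : Measurable q2)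
    (hq2int : Integrable (fun ω => q2 (Z ω, M ω, D ω, X ω)) μ)
    (hYint : Integrable Y μ)
    -- σ-algebras generated by the indicated variables
    (mMDZX mDZX mZX mWX mWDX mWMDX : MeasurableSpace Ω)
    (hmMDZX : mMDZX = MeasurableSpace.comap (fun ω => (M ω, D ω, Z ω, X ω)) inferInstance)
    (hmDZX : mDZX = MeasurableSpace.comap (fun ω => (D ω, Z ω, X ω)) inferInstance)
    (hmZX : mZX = MeasurableSpace.comap (fun ω => (Z ω, X ω)) inferInstance)
    (hmWX : mWX = MeasurableSpace.comap (fun ω => (W ω, X ω)) inferInstance)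
    (hmWDX : mWDX = MeasurableSpace.comap (fun ω => (W ω, D ω, X ω)) inferInstance)
    (hmWMDX : mWMDX = MeasurableSpace.comap (fun ω => (W ω, M ω, D ω, X ω)) inferInstance)
    -- (a) E[Y − h2 | A=1, M, D, Z, X] = 0
    (ha : ((μ[|{ω | A ω = 1}])[(fun ω => Y ω - h2 (W ω, M ω, D ω, X ω)) | mMDZX])
        =ᵐ[μ[|{ω | A ω = 1}]] 0)
    -- (b) E[h2 − h1 | A=0, D, Z, X] = 0
    (hb : ((μ[|{ω | A ω = 0}])[(fun ω => h2 (W ω, M ω, D ω, X ω) - h1 (W ω, D ω, X ω)) | mDZX])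
        =ᵐ[μ[|{ω | A ω = 0}]] 0)
    -- (c) E[h1 − h0 | A=1, Z, X] = 0
    (hc : ((μ[|{ω | A ω = 1}])[(fun ω => h1 (W ω, D ω, X ω) - h0 (W ω, X ω)) | mZX])
        =ᵐ[μ[|{ω | A ω = 1}]] 0)
    -- (d) E[A q0 − 1 | W, X] = 0
    (hd : (μ[(fun ω => A ω * q0 (Z ω, X ω) - 1) | mWX]) =ᵐ[μ] 0)
    -- (e) E[(1−A) q1 − A q0 | W, D, X] = 0
    (he : (μ[(fun ω => (1 - A ω) * q1 (Z ω, D ω, X ω) - A ω * q0 (Z ω, X ω)) | mWDX])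
        =ᵐ[μ] 0)
    -- (f) E[A q2 − (1−A) q1 | W, M, D, X] = 0
    (hf : (μ[(fun ω => A ω * q2 (Z ω, M ω, D ω, X ω) - (1 - A ω) * q1 (Z ω, D ω, X ω)) | mWMDX])
        =ᵐ[μ] 0)
    -- integrability of the relevant products
    (hi1 : Integrable (fun ω => A ω * q0 (Z ω, X ω) * h1 (W ω, D ω, X ω)) μ)
    (hi2 : Integrable (fun ω => A ω * q0 (Z ω, X ω) * h0 (W ω, X ω)) μ)
    (hi3 : Integrable (fun ω => (1 - A ω) * q1 (Z ω, D ω, X ω) * h2 (W ω, M ω, D ω, X ω)) μ)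
    (hi4 : Integrable (fun ω => (1 - A ω) * q1 (Z ω, D ω, X ω) * h1 (W ω, D ω, X ω)) μ)
    (hi5 : Integrable (fun ω => A ω * q2 (Z ω, M ω, D ω, X ω) * h2 (W ω, M ω, D ω, X ω)) μ)
    (hi6 : Integrable (fun ω => A ω * Y ω * q2 (Z ω, M ω, D ω, X ω)) μ) :
    (∫ ω, h0 (W ω, X ω) ∂μ
        = ∫ ω, A ω * q0 (Z ω, X ω) * h1 (W ω, D ω, X ω) ∂μ)
    ∧ (∫ ω, A ω * q0 (Z ω, X ω) * h1 (W ω, D ω, X ω) ∂μ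
        = ∫ ω, (1 - A ω) * q1 (Z ω, D ω, X ω) * h2 (W ω, M ω, D ω, X ω) ∂μ)
    ∧ (∫ ω, (1 - A ω) * q1 (Z ω, D ω, X ω) * h2 (W ω, M ω, D ω, X ω) ∂μ
        = ∫ ω, A ω * Y ω * q2 (Z ω, M ω, D ω, X ω) ∂μ) :=
  stmt5_general (mΩ := mΩ) μ A Y Z W M D X hA hZ hW hM hD hX hA01 h2 hh2 hh2int h1 hh1 hh1int h0 hh0
    hh0int q0 hq0 hq0int q1 hq1 hq1int q2 hq2 hq2int hYint mMDZX mDZX mZX mWX mWDX mWMDX hmMDZX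
    hmDZX hmZX hmWX hmWDX hmWMDX ha hb hc hd he hf hi1 hi2 hi3 hi4 hi5 hi6
end

section
/- Let A ∈ {0,1} and Y, Z, W, M, D, X be random variables. Suppose h2(W,M,D,X), h1(W,D,X), h0(W,X) are integrable measurable functions satisfying E[Y − h2 | A=1, M, D, Z, X] = 0, E[h2 − h1 | A=0, D, Z, X] = 0, and E[h1 − h0 | A=1, Z, X] = 0 almost surely. Then for ANY bounded measurable functions q0'(Z,X), q1'(Z,D,X), q2'(Z,M,D,X), one has E[ A·q0'·(h1 − h0) + (1−A)·q1'·(h2 − h1) + A·q2'·(Y − h2) + h0 ] = E[h0(W,X)]. -/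
open MeasureTheory ProbabilityTheory
open scoped MeasureTheory ProbabilityTheory

/-!
Each augmentation term has the form `1_{A = a} · q(V) · R`, where the residual `R` has zero
conditional mean on `{A = a}` given the variables `V` on which the weight `q` depends. Pulling the
bounded, `σ(V)`-measurable factor `q(V)` out of the conditional expectation shows that the term
integrates to zero, whatever `q` is; what remains of the functional is `E[h0]`.
-/

section ConditionalMoment

variable {Ω : Type*} {m m₀ : MeasurableSpace Ω} {μ : Measure Ω} {s : Set Ω} {g R : Ω → ℝ}
  {C : ℝ}

theorem integral_mul_eq_zero_of_condExp_eq_zero_s8 [IsFiniteMeasure μ] (hm : m ≤ m₀)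
    (hg : StronglyMeasurable[m] g) (hgC : ∀ᵐ ω ∂μ, ‖g ω‖ ≤ C) (hR : Integrable R μ)
    (hRm : μ[R | m] =ᵐ[μ] 0) :
    ∫ ω, g ω * R ω ∂μ = 0 :=
  calc ∫ ω, g ω * R ω ∂μ = ∫ ω, μ[g * R | m] ω ∂μ := (integral_condExp hm).symm
    _ = ∫ ω, (g * μ[R | m]) ω ∂μ :=
      integral_congr_ae (condExp_stronglyMeasurable_mul_of_bound hm hg hR C hgC)
    _ = 0 := integral_eq_zero_of_ae <| by filter_upwards [hRm] with ω hω using by simp [hω]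

theorem restrict_eq_smul_cond (hs : μ s ≠ ⊤) : μ.restrict s = μ s • μ[|s] := by
  by_cases hs₀ : μ s = 0
  · simp [Measure.restrict_eq_zero.mpr hs₀, hs₀]
  · rw [ProbabilityTheory.cond, smul_smul, ENNReal.mul_inv_cancel hs₀ hs, one_smul]

theorem MeasureTheory.Integrable.cond (hR : Integrable R μ) : Integrable R μ[|s] := by
  by_cases hs₀ : μ s = 0
  · simp [cond_eq_zero_of_meas_eq_zero hs₀]
  · exact hR.restrict.smul_measure (ENNReal.inv_ne_top.mpr hs₀)

theorem setIntegral_mul_eq_zero_of_condExp_cond_eq_zero_s8 [IsFiniteMeasure μ] (hm : m ≤ m₀)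
    (hg : StronglyMeasurable[m] g) (hgC : ∀ᵐ ω ∂μ, ‖g ω‖ ≤ C) (hR : Integrable R μ)
    (hRm : μ[|s][R | m] =ᵐ[μ[|s]] 0) :
    ∫ ω in s, g ω * R ω ∂μ = 0 := by
  rw [restrict_eq_smul_cond (measure_ne_top μ s), integral_smul_measure,
    integral_mul_eq_zero_of_condExp_eq_zero_s8 hm hg (cond_absolutelyContinuous.ae_le hgC) hR.cond hRm,
    smul_zero]

end ConditionalMoment

section Indicator

variable {Ω : Type*}

theorem indicator_one_setOf_eq_one {A : Ω → ℝ} (hA : ∀ ω, A ω = 0 ∨ A ω = 1) :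
    {ω | A ω = 1}.indicator 1 = A := by
  ext ω
  rcases hA ω with h | h <;> simp [h]

theorem indicator_one_setOf_eq_zero {A : Ω → ℝ} (hA : ∀ ω, A ω = 0 ∨ A ω = 1) :
    {ω | A ω = 0}.indicator 1 = fun ω => 1 - A ω := by
  ext ω
  rcases hA ω with h | h <;> simp [h]

theorem indicator_one_mul_mul (s : Set Ω) (g R : Ω → ℝ) :
    (fun ω => s.indicator 1 ω * g ω * R ω) = s.indicator fun ω => g ω * R ω := by
  ext ω
  simp only [← Set.indicator_mul_left, Pi.one_apply, one_mul]

end Indicator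

section Augmentation

variable {Ω β : Type*} [MeasurableSpace Ω] [MeasurableSpace β] {μ : Measure Ω} {s : Set Ω}
  {B R : Ω → ℝ} {V : Ω → β} {f : β → ℝ} {C : ℝ}

theorem integrable_indicator_mul_comp_mul (hs : MeasurableSet s) (hB : s.indicator 1 = B)
    (hV : Measurable V) (hf : Measurable f) (hfC : ∀ b, |f b| ≤ C) (hR : Integrable R μ) :
    Integrable (fun ω => B ω * f (V ω) * R ω) μ := by
  subst hB
  rw [indicator_one_mul_mul]
  exact (hR.bdd_mul (hf.comp hV).aestronglyMeasurable (ae_of_all _ fun ω => hfC (V ω))).indicator hs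

theorem integral_indicator_mul_comp_mul_eq_zero [IsFiniteMeasure μ] (hs : MeasurableSet s)
    (hB : s.indicator 1 = B) (hV : Measurable V) (hf : Measurable f) (hfC : ∀ b, |f b| ≤ C)
    (hR : Integrable R μ) (hRV : μ[|s][R | MeasurableSpace.comap V inferInstance] =ᵐ[μ[|s]] 0) :
    ∫ ω, B ω * f (V ω) * R ω ∂μ = 0 := by
  subst hB
  rw [indicator_one_mul_mul, integral_indicator hs]
  exact setIntegral_mul_eq_zero_of_condExp_cond_eq_zero_s8 hV.comap_le
    (hf.comp (comap_measurable V)).stronglyMeasurable (ae_of_all _ fun ω => hfC (V ω)) hR hRV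

end Augmentation

theorem stmt8_general
    {Ω : Type*} [mΩ : MeasurableSpace Ω] (μ : Measure Ω) [IsProbabilityMeasure μ]
    (A Y Z W M D X : Ω → ℝ)
    (hA : Measurable A) (hZ : Measurable Z)
    (hM : Measurable M) (hD : Measurable D) (hX : Measurable X)
    (hA01 : ∀ ω, A ω = 0 ∨ A ω = 1)
    (h2 : ℝ × ℝ × ℝ × ℝ → ℝ)
    (hh2int : Integrable (fun ω => h2 (W ω, M ω, D ω, X ω)) μ)
    (h1 : ℝ × ℝ × ℝ → ℝ)
    (hh1int : Integrable (fun ω => h1 (W ω, D ω, X ω)) μ)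
    (h0 : ℝ × ℝ → ℝ)
    (hh0int : Integrable (fun ω => h0 (W ω, X ω)) μ)
    (hYint : Integrable Y μ)
    (mMDZX mDZX mZX : MeasurableSpace Ω)
    (hmMDZX : mMDZX = MeasurableSpace.comap (fun ω => (M ω, D ω, Z ω, X ω)) inferInstance)
    (hmDZX : mDZX = MeasurableSpace.comap (fun ω => (D ω, Z ω, X ω)) inferInstance)
    (hmZX : mZX = MeasurableSpace.comap (fun ω => (Z ω, X ω)) inferInstance)
    (ha : ((μ[|{ω | A ω = 1}])[(fun ω => Y ω - h2 (W ω, M ω, D ω, X ω)) | mMDZX])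
        =ᵐ[μ[|{ω | A ω = 1}]] 0)
    (hb : ((μ[|{ω | A ω = 0}])[(fun ω => h2 (W ω, M ω, D ω, X ω) - h1 (W ω, D ω, X ω)) | mDZX])
        =ᵐ[μ[|{ω | A ω = 0}]] 0)
    (hc : ((μ[|{ω | A ω = 1}])[(fun ω => h1 (W ω, D ω, X ω) - h0 (W ω, X ω)) | mZX])
        =ᵐ[μ[|{ω | A ω = 1}]] 0) :
    ∀ (q0' : ℝ × ℝ → ℝ) (q1' : ℝ × ℝ × ℝ → ℝ) (q2' : ℝ × ℝ × ℝ × ℝ → ℝ),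
      Measurable q0' → (∃ C, ∀ p, |q0' p| ≤ C) →
      Measurable q1' → (∃ C, ∀ p, |q1' p| ≤ C) →
      Measurable q2' → (∃ C, ∀ p, |q2' p| ≤ C) →
      ∫ ω, (A ω * q0' (Z ω, X ω) * (h1 (W ω, D ω, X ω) - h0 (W ω, X ω))
          + (1 - A ω) * q1' (Z ω, D ω, X ω)
              * (h2 (W ω, M ω, D ω, X ω) - h1 (W ω, D ω, X ω))
          + A ω * q2' (Z ω, M ω, D ω, X ω) * (Y ω - h2 (W ω, M ω, D ω, X ω))
          + h0 (W ω, X ω)) ∂μ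
        = ∫ ω, h0 (W ω, X ω) ∂μ := by
  rintro q0' q1' q2' hq0 ⟨C0, hC0⟩ hq1 ⟨C1, hC1⟩ hq2 ⟨C2, hC2⟩
  subst hmMDZX hmDZX hmZX
  have hs1 : MeasurableSet {ω | A ω = 1} := hA (measurableSet_singleton 1)
  have hs0 : MeasurableSet {ω | A ω = 0} := hA (measurableSet_singleton 0)
  have hA1 := indicator_one_setOf_eq_one hA01
  have hA0 := indicator_one_setOf_eq_zero hA01
  have hZX : Measurable fun ω => (Z ω, X ω) := by fun_prop
  have hDZX : Measurable fun ω => (D ω, Z ω, X ω) := by fun_prop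
  have hMDZX : Measurable fun ω => (M ω, D ω, Z ω, X ω) := by fun_prop
  have hq1' : Measurable fun p : ℝ × ℝ × ℝ => q1' (p.2.1, p.1, p.2.2) := by fun_prop
  have hq2' : Measurable fun p : ℝ × ℝ × ℝ × ℝ => q2' (p.2.2.1, p.1, p.2.1, p.2.2.2) := by
    fun_prop
  have hR0 := hh1int.sub hh0int
  have hR1 := hh2int.sub hh1int
  have hR2 := hYint.sub hh2int
  have i0 := integrable_indicator_mul_comp_mul hs1 hA1 hZX hq0 hC0 hR0
  have i1 := integrable_indicator_mul_comp_mul hs0 hA0 hDZX hq1' (fun _ => hC1 _) hR1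
  have i2 := integrable_indicator_mul_comp_mul hs1 hA1 hMDZX hq2' (fun _ => hC2 _) hR2
  have z0 := integral_indicator_mul_comp_mul_eq_zero hs1 hA1 hZX hq0 hC0 hR0 hc
  have z1 := integral_indicator_mul_comp_mul_eq_zero hs0 hA0 hDZX hq1' (fun _ => hC1 _) hR1 hb
  have z2 := integral_indicator_mul_comp_mul_eq_zero hs1 hA1 hMDZX hq2' (fun _ => hC2 _) hR2 ha
  dsimp only [Pi.sub_apply] at i0 i1 i2 z0 z1 z2
  rw [integral_add ?_ hh0int, integral_add ?_ i2, integral_add i0 i1, z0, z1, z2]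
  · simp
  · exact i0.add i1
  · exact (i0.add i1).add i2

/-- if the outcome bridge functions `h2, h1, h0` satisfy their three
conditional moment equations (conditioning on the events `{A=1}` resp. `{A=0}`
encoded via conditional measures), then for ANY bounded measurable `q0', q1', q2'`
the augmented functional equals the proximal outcome regression formula `E[h0]`. -/
theorem stmt8
    {Ω : Type*} [mΩ : MeasurableSpace Ω] (μ : Measure Ω) [IsProbabilityMeasure μ]
    (A Y Z W M D X : Ω → ℝ)
    (hA : Measurable A) (hY : Measurable Y) (hZ : Measurable Z) (hW : Measurable W)
    (hM : Measurable M) (hD : Measurable D) (hX : Measurable X)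
    (hA01 : ∀ ω, A ω = 0 ∨ A ω = 1)
    (h2 : ℝ × ℝ × ℝ × ℝ → ℝ) (hh2 : Measurable h2)
    (hh2int : Integrable (fun ω => h2 (W ω, M ω, D ω, X ω)) μ)
    (h1 : ℝ × ℝ × ℝ → ℝ) (hh1 : Measurable h1)
    (hh1int : Integrable (fun ω => h1 (W ω, D ω, X ω)) μ)
    (h0 : ℝ × ℝ → ℝ) (hh0 : Measurable h0)
    (hh0int : Integrable (fun ω => h0 (W ω, X ω)) μ)
    (hYint : Integrable Y μ)
    (mMDZX mDZX mZX : MeasurableSpace Ω)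
    (hmMDZX : mMDZX = MeasurableSpace.comap (fun ω => (M ω, D ω, Z ω, X ω)) inferInstance)
    (hmDZX : mDZX = MeasurableSpace.comap (fun ω => (D ω, Z ω, X ω)) inferInstance)
    (hmZX : mZX = MeasurableSpace.comap (fun ω => (Z ω, X ω)) inferInstance)
    (ha : ((μ[|{ω | A ω = 1}])[(fun ω => Y ω - h2 (W ω, M ω, D ω, X ω)) | mMDZX])
        =ᵐ[μ[|{ω | A ω = 1}]] 0)
    (hb : ((μ[|{ω | A ω = 0}])[(fun ω => h2 (W ω, M ω, D ω, X ω) - h1 (W ω, D ω, X ω)) | mDZX])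
        =ᵐ[μ[|{ω | A ω = 0}]] 0)
    (hc : ((μ[|{ω | A ω = 1}])[(fun ω => h1 (W ω, D ω, X ω) - h0 (W ω, X ω)) | mZX])
        =ᵐ[μ[|{ω | A ω = 1}]] 0) :
    ∀ (q0' : ℝ × ℝ → ℝ) (q1' : ℝ × ℝ × ℝ → ℝ) (q2' : ℝ × ℝ × ℝ × ℝ → ℝ),
      Measurable q0' → (∃ C, ∀ p, |q0' p| ≤ C) →
      Measurable q1' → (∃ C, ∀ p, |q1' p| ≤ C) →
      Measurable q2' → (∃ C, ∀ p, |q2' p| ≤ C) →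
      ∫ ω, (A ω * q0' (Z ω, X ω) * (h1 (W ω, D ω, X ω) - h0 (W ω, X ω))
          + (1 - A ω) * q1' (Z ω, D ω, X ω)
              * (h2 (W ω, M ω, D ω, X ω) - h1 (W ω, D ω, X ω))
          + A ω * q2' (Z ω, M ω, D ω, X ω) * (Y ω - h2 (W ω, M ω, D ω, X ω))
          + h0 (W ω, X ω)) ∂μ
        = ∫ ω, h0 (W ω, X ω) ∂μ :=
  stmt8_general (mΩ := mΩ) μ A Y Z W M D X hA hZ hM hD hX hA01 h2 hh2int h1 hh1int h0 hh0int hYint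
    mMDZX mDZX mZX hmMDZX hmDZX hmZX ha hb hc
end
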